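/- arXiv:1506.06608 — 5 statements merged into one kernel-verified Lean document; each statement's English description precedes it below -/
import Mathlib

section
/- Let Ω be a Polish space with Borel σ-algebra, and let 𝒫 be the space of Borel probability measures on Ω endowed with the topology of weak convergence. Then the set 𝒫_f of probability measures with finite support is an analytic subset of 𝒫. -/
open MeasureTheory BoundedContinuousFunction
open scoped ENNReal NNReal BigOperators

section aux

variable {Ω : Type*} [TopologicalSpace Ω] [MeasurableSpace Ω] [BorelSpace Ω]

/-- Convex combination of Dirac measures. -/
noncomputable def comboMeasure {n : ℕ} (x : Fin n → Ω) (w : Fin n → ℝ) : Measure Ω :=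
  ∑ i, ((w i).toNNReal : ℝ≥0∞) • Measure.dirac (x i)

lemma comboMeasure_apply {n : ℕ} (x : Fin n → Ω) (w : Fin n → ℝ) {A : Set Ω}
    (hA : MeasurableSet A) :
    comboMeasure x w A = ∑ i, ((w i).toNNReal : ℝ≥0∞) * A.indicator 1 (x i) := by
  rw [comboMeasure, Measure.finset_sum_apply]
  simp_rw [Measure.smul_apply, Measure.dirac_apply' _ hA, smul_eq_mul]

lemma comboMeasure_apply_eq_one {n : ℕ} (x : Fin n → Ω) {w : Fin n → ℝ}
    (hw : w ∈ stdSimplex ℝ (Fin n)) {A : Set Ω} (hA : MeasurableSet A)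
    (hxA : ∀ i, x i ∈ A) : comboMeasure x w A = 1 := by
  rw [comboMeasure_apply x w hA]
  have h1 : ∀ i, A.indicator (1 : Ω → ℝ≥0∞) (x i) = 1 := fun i =>
    Set.indicator_of_mem (hxA i) 1
  simp_rw [h1, mul_one, ← ENNReal.coe_finset_sum]
  norm_cast
  rw [← Real.toNNReal_sum_of_nonneg (fun i _ => hw.1 i), hw.2, Real.toNNReal_one]

lemma isProbabilityMeasure_comboMeasure {n : ℕ} (x : Fin n → Ω) {w : Fin n → ℝ}
    (hw : w ∈ stdSimplex ℝ (Fin n)) : IsProbabilityMeasure (comboMeasure x w) :=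
  ⟨comboMeasure_apply_eq_one x hw MeasurableSet.univ fun _ => trivial⟩

/-- Convex combinations of Dirac masses as probability measures. -/
noncomputable def comboProba {n : ℕ} (p : (Fin n → Ω) × stdSimplex ℝ (Fin n)) :
    ProbabilityMeasure Ω :=
  ⟨comboMeasure p.1 p.2.1, isProbabilityMeasure_comboMeasure p.1 p.2.2⟩

lemma lintegral_comboMeasure {n : ℕ} (x : Fin n → Ω) (w : Fin n → ℝ) (f : Ω →ᵇ ℝ≥0) :
    ∫⁻ ω, (f ω : ℝ≥0∞) ∂(comboMeasure x w)
      = ((∑ i, (w i).toNNReal * f (x i) : ℝ≥0) : ℝ≥0∞) := by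
  have hf : Measurable fun ω => (f ω : ℝ≥0∞) :=
    measurable_coe_nnreal_ennreal_iff.mpr f.continuous.measurable
  rw [comboMeasure, lintegral_finset_sum_measure]
  simp_rw [lintegral_smul_measure, lintegral_dirac' _ hf]
  push_cast
  rfl

lemma testAgainstNN_comboProba {n : ℕ} (p : (Fin n → Ω) × stdSimplex ℝ (Fin n))
    (f : Ω →ᵇ ℝ≥0) :
    (comboProba p).toFiniteMeasure.testAgainstNN f
      = ∑ i, (p.2.1 i).toNNReal * f (p.1 i) := by
  rw [FiniteMeasure.testAgainstNN]
  erw [lintegral_comboMeasure p.1 p.2.1 f]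
  exact ENNReal.toNNReal_coe _

lemma continuous_comboProba {n : ℕ} :
    Continuous (comboProba : (Fin n → Ω) × stdSimplex ℝ (Fin n) → ProbabilityMeasure Ω) := by
  apply continuous_induced_rng.2
  apply continuous_induced_rng.2
  apply WeakBilin.continuous_of_continuous_eval
  intro f
  have : (fun p : (Fin n → Ω) × stdSimplex ℝ (Fin n) =>
      ((comboProba p).toFiniteMeasure.toWeakDualBCNN : (Ω →ᵇ ℝ≥0) →L[ℝ≥0] ℝ≥0) f)
      = fun p => ∑ i, (p.2.1 i).toNNReal * f (p.1 i) := by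
    funext p
    exact testAgainstNN_comboProba p f
  erw [this]
  apply continuous_finset_sum
  intro i _
  exact ((continuous_real_toNNReal.comp
    ((continuous_apply i).comp (continuous_subtype_val.comp continuous_snd))).mul
    (f.continuous.comp ((continuous_apply i).comp continuous_fst)))

end aux

/-- The set of finitely supported Borel probability measures on a Polish space is an
analytic subset of the space of probability measures with the weak topology. -/
theorem finitely_supported_probabilityMeasures_analyticSet
    (Ω : Type*) [TopologicalSpace Ω] [PolishSpace Ω]
    [MeasurableSpace Ω] [BorelSpace Ω] :
    MeasureTheory.AnalyticSet
      {μ : ProbabilityMeasure Ω | ∃ s : Set Ω, s.Finite ∧ (μ : Measure Ω) s = 1} := by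
  have key : {μ : ProbabilityMeasure Ω | ∃ s : Set Ω, s.Finite ∧ (μ : Measure Ω) s = 1}
      = ⋃ n : ℕ, Set.range (comboProba : (Fin n → Ω) × stdSimplex ℝ (Fin n)
          → ProbabilityMeasure Ω) := by
    ext μ
    simp only [Set.mem_setOf_eq, Set.mem_iUnion, Set.mem_range]
    constructor
    · classical
      rintro ⟨s, hs, hμs⟩
      set F := hs.toFinset with hF
      set n := F.card with hn
      set e := F.equivFin.symm with he
      set x : Fin n → Ω := fun i => (e i : Ω) with hx
      have hxinj : Function.Injective x := fun i j hij => by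
        apply e.injective; exact Subtype.ext hij
      have hrange : Set.range x = s := by
        ext ω
        simp only [Set.mem_range, hx]
        constructor
        · rintro ⟨i, rfl⟩
          exact hs.mem_toFinset.mp (e i).2
        · intro hω
          exact ⟨e.symm ⟨ω, hs.mem_toFinset.mpr hω⟩, by simp⟩
      have hmeas_single : ∀ i, MeasurableSet ({x i} : Set Ω) := fun i =>
        measurableSet_singleton _
      have hsum : ∑ i, (μ : Measure Ω) {x i} = 1 := by
        have : (⋃ i ∈ (Finset.univ : Finset (Fin n)), ({x i} : Set Ω)) = s := by
          rw [← hrange]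
          ext ω; simp
        rw [← hμs, ← this, measure_biUnion_finset ?_ (fun i _ => hmeas_single i)]
        intro i _ j _ hij
        simp only [Function.onFun, Set.disjoint_singleton]
        exact fun h => hij (hxinj h)
      have hfin : ∀ i, (μ : Measure Ω) {x i} ≠ ∞ := fun i => measure_ne_top _ _
      set w : Fin n → ℝ := fun i => ((μ : Measure Ω) {x i}).toReal with hw
      have hwmem : w ∈ stdSimplex ℝ (Fin n) := by
        constructor
        · intro i; exact ENNReal.toReal_nonneg
        · rw [hw]
          rw [← ENNReal.toReal_sum (fun i _ => hfin i), hsum, ENNReal.toReal_one]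
      refine ⟨n, ⟨x, ⟨w, hwmem⟩⟩, ?_⟩
      apply Subtype.ext
      apply Measure.ext
      intro A hA
      show comboMeasure x w A = (μ : Measure Ω) A
      have hcoe : ∀ i, (((w i).toNNReal : ℝ≥0) : ℝ≥0∞) = (μ : Measure Ω) {x i} := by
        intro i
        rw [hw]
        simp only [ENNReal.toReal]
        rw [Real.toNNReal_coe, ENNReal.coe_toNNReal (hfin i)]
      rw [comboMeasure_apply x w hA]
      simp_rw [hcoe]
      -- Now show ∑ i, μ {x i} * indicator = μ A
      have hsmeas : MeasurableSet s := hs.measurableSet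
      have hcompl : (μ : Measure Ω) sᶜ = 0 := by
        have := measure_compl (μ := (μ : Measure Ω)) hsmeas (measure_ne_top _ _)
        rw [hμs, measure_univ] at this
        simp [this]
      have hAs : (μ : Measure Ω) A = (μ : Measure Ω) (A ∩ s) := by
        have h1 : (μ : Measure Ω) (A ∩ s) + (μ : Measure Ω) (A \ s) = (μ : Measure Ω) A :=
          measure_inter_add_diff A hsmeas
        have h2 : (μ : Measure Ω) (A \ s) = 0 :=
          le_antisymm (le_trans (measure_mono (Set.diff_subset_compl A s)) hcompl.le)
            (zero_le)
        rw [← h1, h2, add_zero]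
      rw [hAs]
      have hinter : A ∩ s = ⋃ i ∈ Finset.univ.filter (fun i => x i ∈ A), ({x i} : Set Ω) := by
        ext ω
        simp only [Set.mem_inter_iff, Set.mem_iUnion, Finset.mem_filter, Finset.mem_univ,
          true_and, Set.mem_singleton_iff]
        constructor
        · rintro ⟨hωA, hωs⟩
          rw [← hrange] at hωs
          obtain ⟨i, rfl⟩ := hωs
          exact ⟨i, hωA, rfl⟩
        · rintro ⟨i, hiA, rfl⟩
          exact ⟨hiA, by rw [← hrange]; exact ⟨i, rfl⟩⟩
      rw [hinter, measure_biUnion_finset ?_ (fun i _ => hmeas_single i)]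
      · rw [Finset.sum_filter]
        apply Finset.sum_congr rfl
        intro i _
        by_cases hiA : x i ∈ A
        · rw [if_pos hiA, Set.indicator_of_mem hiA, Pi.one_apply, mul_one]
        · rw [if_neg hiA, Set.indicator_of_notMem hiA, mul_zero]
      · intro i _ j hj hij
        simp only [Function.onFun, Set.disjoint_singleton]
        exact fun h => hij (hxinj h)
    · rintro ⟨n, ⟨x, w⟩, rfl⟩
      refine ⟨Set.range x, Set.finite_range x, ?_⟩
      have hmeas : MeasurableSet (Set.range x) := (Set.finite_range x).measurableSet
      exact comboMeasure_apply_eq_one x w.2 hmeas fun i => Set.mem_range_self i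
  rw [key]
  apply AnalyticSet.iUnion
  intro n
  haveI : PolishSpace (stdSimplex ℝ (Fin n)) := (isClosed_stdSimplex ℝ (Fin n)).polishSpace
  exact analyticSet_range_of_polishSpace continuous_comboProba
end

section
/- Let (Ω, ℱ) be a measurable space and M a nonempty convex set of probability measures on (Ω,ℱ), each with finite support. Suppose g : Ω → ℝ is ℱ-measurable and for every Q ∈ M there exist x^Q ∈ ℝ and a function k^Q : Ω → ℝ with E_Q[k^Q] = 0 such that x^Q + k^Q(ω) = g(ω) for all ω in the support of Q, and moreover each market satisfies no-arbitrage in the sense that no k with E_Q[k]=0 satisfies k ≥ 0 on supp(Q) with strict inequality somewhere on supp(Q). Then the price is unique: x^{Q_1} = x^{Q_2} for all Q_1, Q_2 ∈ M. -/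
open MeasureTheory
open scoped ENNReal

/-- Uniqueness of the replication price: if a claim `g` is replicated (at cost `x Q`, by a
zero-cost attainable payoff `k Q` from the linear space `K`) on the support of every finitely
supported martingale measure `Q` in a convex family `M` satisfying no-arbitrage, then the
replication price does not depend on `Q`. -/
theorem replication_price_unique
    (Ω : Type*) [MeasurableSpace Ω] [MeasurableSingletonClass Ω]
    (M : Set (Measure Ω)) (hMne : M.Nonempty)
    (hprob : ∀ Q ∈ M, IsProbabilityMeasure Q)
    (hfin : ∀ Q ∈ M, (Function.support fun ω => Q {ω}).Finite)
    (hsupp : ∀ Q ∈ M, Q {ω | Q {ω} = 0} = 0)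
    (hconv : ∀ Q₁ ∈ M, ∀ Q₂ ∈ M, ∀ l : ℝ≥0∞, 0 < l → l < 1 →
      l • Q₁ + (1 - l) • Q₂ ∈ M)
    (K : Submodule ℝ (Ω → ℝ))
    (hzero : ∀ k ∈ K, ∀ Q ∈ M, ∫ ω, k ω ∂Q = 0)
    (hNA : ∀ Q ∈ M, ∀ k ∈ K, (∀ ω, 0 < Q {ω} → 0 ≤ k ω) → ∀ ω, 0 < Q {ω} → k ω = 0)
    (g : Ω → ℝ) (hg : Measurable g)
    (x : Measure Ω → ℝ) (k : Measure Ω → Ω → ℝ)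
    (hk : ∀ Q ∈ M, k Q ∈ K)
    (hrepl : ∀ Q ∈ M, ∀ ω, 0 < Q {ω} → x Q + k Q ω = g ω) :
    ∀ Q₁ ∈ M, ∀ Q₂ ∈ M, x Q₁ = x Q₂ := by
  -- A function equal to a constant on the support of `Q ∈ M` integrates to that constant.
  have key : ∀ Q ∈ M, ∀ (f : Ω → ℝ) (c : ℝ), (∀ ω, 0 < Q {ω} → f ω = c) →
      ∫ ω, f ω ∂Q = c := by
    intro Q hQ f c hf
    haveI := hprob Q hQ
    have hae : f =ᵐ[Q] fun _ => c := by
      apply measure_mono_null _ (hsupp Q hQ)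
      intro ω hω
      simp only [Set.mem_setOf_eq] at hω ⊢
      by_contra h
      exact hω (hf ω (pos_iff_ne_zero.mpr h))
    rw [integral_congr_ae hae]
    simp
  intro Q₁ hQ₁ Q₂ hQ₂
  set Qm : Measure Ω := (1/2 : ℝ≥0∞) • Q₁ + (1 - 1/2 : ℝ≥0∞) • Q₂ with hQmdef
  have hQm : Qm ∈ M := hconv Q₁ hQ₁ Q₂ hQ₂ (1/2) (by norm_num)
    (by simpa using ENNReal.half_lt_self (by norm_num) (by norm_num))
  have hhalf : (1 - 1/2 : ℝ≥0∞) = 1/2 :=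
    ENNReal.sub_eq_of_eq_add (by norm_num) (ENNReal.add_halves 1).symm
  have hpos : ∀ Qa : Measure Ω, (Qa = Q₁ ∨ Qa = Q₂) → ∀ ω, 0 < Qa {ω} → 0 < Qm {ω} := by
    intro Qa hQa ω h
    have hm : Qm {ω} = (1/2 : ℝ≥0∞) * Q₁ {ω} + (1/2 : ℝ≥0∞) * Q₂ {ω} := by
      simp [hQmdef, Measure.add_apply, Measure.smul_apply, smul_eq_mul, hhalf]
    have hp : (0 : ℝ≥0∞) < (1/2 : ℝ≥0∞) * Qa {ω} :=
      ENNReal.mul_pos (by norm_num) h.ne'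
    rcases hQa with rfl | rfl
    · calc (0:ℝ≥0∞) < (1/2 : ℝ≥0∞) * Qa {ω} := hp
        _ ≤ Qm {ω} := by rw [hm]; exact le_self_add
    · calc (0:ℝ≥0∞) < (1/2 : ℝ≥0∞) * Qa {ω} := hp
        _ ≤ Qm {ω} := by rw [hm]; exact le_add_self
  have step : ∀ Qa ∈ M, (∀ ω, 0 < Qa {ω} → 0 < Qm {ω}) → x Qa = x Qm := by
    intro Qa hQa hp
    have hk' : k Qa - k Qm ∈ K := Submodule.sub_mem K (hk Qa hQa) (hk Qm hQm)
    have h0 := hzero _ hk' Qa hQa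
    simp only [Pi.sub_apply] at h0
    have hc := key Qa hQa (fun ω => k Qa ω - k Qm ω) (x Qm - x Qa) (by
      intro ω hω
      have h1 := hrepl Qa hQa ω hω
      have h2 := hrepl Qm hQm ω (hp ω hω)
      show k Qa ω - k Qm ω = x Qm - x Qa
      linarith)
    rw [h0] at hc
    linarith
  rw [step Q₁ hQ₁ (hpos Q₁ (Or.inl rfl)), step Q₂ hQ₂ (hpos Q₂ (Or.inr rfl))]
end

section
/- Let Q be a finitely supported probability measure on (Ω,ℱ), 𝒦 a linear subspace of ℱ-measurable functions with E_Q[k]=0 for all k ∈ 𝒦, and 𝒞_Q = {G ∈ L⁰(Q) : G ≤ K Q-a.s. for some K ∈ 𝒦}. Then a bounded nonnegative Z ∈ L^∞(Q) satisfies E_Q[ZG] ≤ 0 for all G ∈ 𝒞_Q if and only if the measure R with dR/dQ = Z/E_Q[Z] (when E_Q[Z]>0) satisfies E_R[k] = 0 for all k ∈ 𝒦; in particular the polar of 𝒞_Q consists of nonnegative elements of L^∞(Q). -/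
open MeasureTheory
open scoped ENNReal

/-- Characterization of the polar of the cone `𝒞_Q`: a bounded nonnegative `Z` is in the
polar iff the normalized measure `R` with density `Z / E_Q[Z]` annihilates the space `K` of
zero-cost payoffs; and every element of the polar is `Q`-a.s. nonnegative. -/
theorem polar_characterization
    (Ω : Type*) [MeasurableSpace Ω] [MeasurableSingletonClass Ω]
    (Q : Measure Ω) [IsProbabilityMeasure Q]
    (hfin : (Function.support fun ω => Q {ω}).Finite)
    (hsupp : Q {ω | Q {ω} = 0} = 0)
    (K : Submodule ℝ (Ω → ℝ)) (hKmeas : ∀ k ∈ K, Measurable k)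
    (hzero : ∀ k ∈ K, ∫ ω, k ω ∂Q = 0)
    (CQ : Set (Ω → ℝ)) (hCQ : CQ = {G | Measurable G ∧ ∃ k ∈ K, G ≤ᵐ[Q] k}) :
    -- any element of the polar is a.s. nonnegative
    (∀ Z : Ω → ℝ, Measurable Z → (∃ C : ℝ, ∀ ω, |Z ω| ≤ C) →
      (∀ G ∈ CQ, ∫ ω, Z ω * G ω ∂Q ≤ 0) → 0 ≤ᵐ[Q] Z) ∧
    -- for bounded nonnegative `Z` with `E_Q[Z] > 0`, membership in the polar is equivalent to
    -- the normalized density measure being a martingale measure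
    (∀ Z : Ω → ℝ, Measurable Z → (∀ ω, 0 ≤ Z ω) → (∃ C : ℝ, ∀ ω, Z ω ≤ C) →
      0 < ∫ ω, Z ω ∂Q →
      ((∀ G ∈ CQ, ∫ ω, Z ω * G ω ∂Q ≤ 0) ↔
        ∀ k ∈ K, ∫ ω, k ω
            ∂((ENNReal.ofReal (∫ ω, Z ω ∂Q))⁻¹ •
                Q.withDensity (fun ω => ENNReal.ofReal (Z ω))) = 0)) := by
    classical
  -- every measurable function is Q-integrable
  have hint : ∀ f : Ω → ℝ, Measurable f → Integrable f Q := by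
    intro f hf
    set S := hfin.toFinset with hS
    have hSm : MeasurableSet (S : Set Ω) := (S : Set Ω).toFinite.measurableSet
    set g := Set.indicator (S : Set Ω) f with hg
    have hgm : Measurable g := hf.indicator hSm
    have hbound : ∀ ω, ‖g ω‖ ≤ ∑ ω ∈ S, |f ω| := by
      intro ω
      by_cases h : ω ∈ (S : Set Ω)
      · rw [hg, Set.indicator_of_mem h]
        exact Finset.single_le_sum (fun i _ => abs_nonneg (f i)) (by simpa using h)
      · rw [hg, Set.indicator_of_notMem h]
        simpa using Finset.sum_nonneg fun i (_ : i ∈ S) => abs_nonneg (f i)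
    have hgi : Integrable g Q :=
      (integrable_const _).mono' hgm.aestronglyMeasurable (ae_of_all _ hbound)
    refine hgi.congr ?_
    rw [Filter.eventuallyEq_iff_exists_mem]
    refine ⟨{ω | Q {ω} = 0}ᶜ, ?_, ?_⟩
    · rw [mem_ae_iff]; simpa using hsupp
    · intro ω hω
      have : ω ∈ (S : Set Ω) := by
        simp only [hS, Set.Finite.coe_toFinset, Function.mem_support]
        simpa using hω
      rw [hg, Set.indicator_of_mem this]
  constructor
  · -- nonnegativity of polar elements
    intro Z hZ _hC hpolar
    set A := {ω | Z ω < 0} with hA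
    have hAm : MeasurableSet A := measurableSet_lt hZ measurable_const
    set G := Set.indicator A (fun _ => (-1 : ℝ)) with hG
    have hGm : Measurable G := measurable_const.indicator hAm
    have hGCQ : G ∈ CQ := by
      rw [hCQ]
      refine ⟨hGm, 0, K.zero_mem, ae_of_all _ fun ω => ?_⟩
      by_cases h : ω ∈ A
      · simp [hG, Set.indicator_of_mem h]
      · simp [hG, Set.indicator_of_notMem h]
    have hle := hpolar G hGCQ
    have heq : ∀ ω, Z ω * G ω = Set.indicator A (fun ω => -Z ω) ω := by
      intro ω
      by_cases h : ω ∈ A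
      · simp [hG, Set.indicator_of_mem h]
      · simp [hG, Set.indicator_of_notMem h]
    rw [show (fun ω => Z ω * G ω) = Set.indicator A (fun ω => -Z ω) from funext heq] at hle
    rw [integral_indicator hAm] at hle
    have hnn : 0 ≤ᵐ[Q.restrict A] fun ω => -Z ω := by
      refine (ae_restrict_iff' hAm).mpr (ae_of_all _ fun ω hω => ?_)
      have : Z ω < 0 := hω
      simp only [Pi.zero_apply]
      linarith
    have hin : Integrable (fun ω => -Z ω) (Q.restrict A) :=
      ((hint Z hZ).neg).restrict
    have hz : ∫ ω in A, -Z ω ∂Q = 0 :=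
      le_antisymm hle (integral_nonneg_of_ae hnn)
    have hae0 : (fun ω => -Z ω) =ᵐ[Q.restrict A] 0 :=
      (integral_eq_zero_iff_of_nonneg_ae hnn hin).mp hz
    have hQA : Q A = 0 := by
      have h1 : (Q.restrict A) {ω | ¬ -Z ω = 0} = 0 := by
        have := ae_iff.mp hae0
        simpa using this
      have h2 : A ⊆ {ω | ¬ -Z ω = 0} := by
        intro ω hω
        have : Z ω < 0 := hω
        simp only [Set.mem_setOf_eq, neg_eq_zero]
        intro h; linarith
      have h3 : Q.restrict A A = Q A := Measure.restrict_apply_self _ _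
      have h4 : Q.restrict A A = 0 :=
        le_antisymm (h1 ▸ measure_mono (μ := Q.restrict A) h2) zero_le
      rw [← h3, h4]
    rw [Filter.EventuallyLE, ae_iff]
    have : {ω | ¬ (0 : Ω → ℝ) ω ≤ Z ω} = A := by
      ext ω; simp [hA, not_le]
    rw [this]; exact hQA
  · -- equivalence for nonnegative Z
    intro Z hZ hZnn _hC hEZ
    set c := ∫ ω, Z ω ∂Q with hc
    -- integral with respect to R
    have hR : ∀ k : Ω → ℝ, Measurable k →
        (∫ ω, k ω ∂((ENNReal.ofReal c)⁻¹ •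
            Q.withDensity (fun ω => ENNReal.ofReal (Z ω)))) = c⁻¹ * ∫ ω, Z ω * k ω ∂Q := by
      intro k hk
      rw [integral_smul_measure]
      have hwd : Q.withDensity (fun ω => ENNReal.ofReal (Z ω))
          = Q.withDensity (fun ω => ((Z ω).toNNReal : ℝ≥0∞)) := rfl
      rw [hwd, integral_withDensity_eq_integral_smul hZ.real_toNNReal k]
      have : (fun ω => (Z ω).toNNReal • k ω) = fun ω => Z ω * k ω := by
        funext ω
        simp [NNReal.smul_def, Real.coe_toNNReal _ (hZnn ω)]
      rw [this, ENNReal.toReal_inv, ENNReal.toReal_ofReal hEZ.le, smul_eq_mul]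
    have hcne : c⁻¹ ≠ 0 := inv_ne_zero hEZ.ne'
    constructor
    · intro hpolar k hk
      have hkm := hKmeas k hk
      have h1 : ∫ ω, Z ω * k ω ∂Q ≤ 0 :=
        hpolar k (by rw [hCQ]; exact ⟨hkm, k, hk, Filter.EventuallyLE.refl _ _⟩)
      have h2 : ∫ ω, Z ω * (-k) ω ∂Q ≤ 0 :=
        hpolar (-k) (by rw [hCQ]; exact ⟨(hKmeas _ (neg_mem hk)), -k, neg_mem hk,
          Filter.EventuallyLE.refl _ _⟩)
      have h2' : -∫ ω, Z ω * k ω ∂Q ≤ 0 := by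
        rw [← integral_neg]
        convert h2 using 2 with ω
        simp [mul_neg]
      have h0 : ∫ ω, Z ω * k ω ∂Q = 0 := le_antisymm h1 (by linarith)
      rw [hR k hkm, h0, mul_zero]
    · intro hmart G hG
      rw [hCQ] at hG
      obtain ⟨hGm, k, hk, hle⟩ := hG
      have hkm := hKmeas k hk
      have hk0 : ∫ ω, Z ω * k ω ∂Q = 0 := by
        have := hmart k hk
        rw [hR k hkm] at this
        exact (mul_eq_zero.mp this).resolve_left hcne
      calc ∫ ω, Z ω * G ω ∂Q ≤ ∫ ω, Z ω * k ω ∂Q := by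
            refine integral_mono_ae (hint _ (hZ.mul hGm)) (hint _ (hZ.mul hkm)) ?_
            exact hle.mono fun ω h => mul_le_mul_of_nonneg_left h (hZnn ω)
        _ = 0 := hk0
end

section
/- In the one-period market on Ω = [0,∞) with S_0 = s_0 > 0, S_1(ω) = ω, butterfly option φ⁰ (strikes K₀, K₀+1, K₀+2, price 0), and power option φ¹(ω) = (ω²−K₁)⁺ (price c₁ > 0), with K₀ > s₀ and K₁ > (K₀+2)², for every ω₀ ∈ Γ := [0,∞) \ (K₀, K₀+2) there exists a finitely supported probability measure Q with supp(Q) ⊆ Γ, Q({ω₀}) > 0, E_Q[S_1] = s_0, E_Q[φ⁰] = 0, and E_Q[φ¹] = c₁. -/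
open MeasureTheory

/-- The butterfly spread payoff with strikes `K₀, K₀+1, K₀+2`. -/
noncomputable def butterfly (K₀ : ℝ) (ω : ℝ) : ℝ :=
  max (ω - K₀) 0 - 2 * max (ω - (K₀ + 1)) 0 + max (ω - (K₀ + 2)) 0

/-- The power option payoff with strike `K₁`. -/
noncomputable def powerOption (K₁ : ℝ) (ω : ℝ) : ℝ := max (ω ^ 2 - K₁) 0

lemma integrable_dirac_of_meas {f : ℝ → ℝ} (hf : Measurable f) (a : ℝ) :
    Integrable f (Measure.dirac a) := by
  refine ⟨hf.aestronglyMeasurable, ?_⟩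
  rw [HasFiniteIntegral, lintegral_dirac]
  exact ENNReal.coe_lt_top

lemma butterfly_eq_zero {K₀ ω : ℝ} (hK₀ : 0 < K₀) (hω : ω ≤ K₀ ∨ K₀ + 2 ≤ ω) :
    butterfly K₀ ω = 0 := by
  unfold butterfly
  rcases hω with h | h
  · rw [max_eq_right (by linarith), max_eq_right (by linarith), max_eq_right (by linarith)]
    ring
  · rw [max_eq_left (by linarith), max_eq_left (by linarith), max_eq_left (by linarith)]
    ring

set_option maxHeartbeats 1600000

/-- Every point of `Γ = [0,∞) \ (K₀, K₀+2)` is charged by some finitely supported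
martingale measure (calibrated to the stock and both option prices) supported in `Γ`. -/
theorem exists_finitely_supported_martingale_measure
    (s₀ K₀ K₁ c₁ : ℝ) (hs₀ : 0 < s₀) (hK₀ : K₀ > s₀) (hK₁ : K₁ > (K₀ + 2) ^ 2)
    (hc₁ : 0 < c₁) :
    ∀ ω₀ ∈ Set.Ici (0 : ℝ) \ Set.Ioo K₀ (K₀ + 2),
      ∃ Q : Measure ℝ, IsProbabilityMeasure Q ∧
        (∃ s : Finset ℝ, ↑s ⊆ Set.Ici (0 : ℝ) \ Set.Ioo K₀ (K₀ + 2) ∧ Q (↑s)ᶜ = 0) ∧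
        0 < Q {ω₀} ∧
        ∫ ω, ω ∂Q = s₀ ∧
        ∫ ω, butterfly K₀ ω ∂Q = 0 ∧
        ∫ ω, powerOption K₁ ω ∂Q = c₁ := by
  rintro ω₀ ⟨hω₀0, hω₀Γ⟩
  simp only [Set.mem_Ici] at hω₀0
  have hK₁pos : 0 < K₁ := lt_trans (by nlinarith) hK₁
  set φω : ℝ := powerOption K₁ ω₀ with hφω
  have hφω0 : 0 ≤ φω := le_max_right _ _
  -- the small weight at ω₀
  set ε : ℝ := min (min (s₀ / (2 * (ω₀ + 1))) (c₁ / (2 * (φω + 1)))) (1 / (s₀ + 2)) with hε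
  have hεpos : 0 < ε := by
    exact lt_min (lt_min (div_pos hs₀ (by linarith)) (div_pos hc₁ (by linarith))) (div_pos one_pos (by linarith))
  have hεω : ε * ω₀ ≤ s₀ / 2 := by
    have h1 : ε ≤ s₀ / (2 * (ω₀ + 1)) := le_trans (min_le_left _ _) (min_le_left _ _)
    have h2 : ε * (2 * (ω₀ + 1)) ≤ s₀ := (le_div_iff₀ (by linarith)).mp h1
    nlinarith
  have hεφ : ε * φω ≤ c₁ / 2 := by
    have h1 : ε ≤ c₁ / (2 * (φω + 1)) := le_trans (min_le_left _ _) (min_le_right _ _)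
    have h2 : ε * (2 * (φω + 1)) ≤ c₁ := (le_div_iff₀ (by linarith)).mp h1
    nlinarith
  have hεs : ε ≤ 1 / (s₀ + 2) := min_le_right _ _
  have hA : 0 < s₀ - ε * ω₀ := by linarith
  have hB : 0 < c₁ - ε * φω := by linarith
  set r : ℝ := (c₁ - ε * φω) / (s₀ - ε * ω₀) with hr
  have hrpos : 0 < r := div_pos hB hA
  set M : ℝ := (r + Real.sqrt (r ^ 2 + 4 * K₁)) / 2 with hM
  have hsq : Real.sqrt (r ^ 2 + 4 * K₁) ^ 2 = r ^ 2 + 4 * K₁ :=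
    Real.sq_sqrt (by positivity)
  have hsqnn : 0 ≤ Real.sqrt (r ^ 2 + 4 * K₁) := Real.sqrt_nonneg _
  have hMquad : M ^ 2 = r * M + K₁ := by
    rw [hM]; field_simp; nlinarith [hsq]
  have hsqK : Real.sqrt K₁ > K₀ + 2 := by
    rw [show K₀ + 2 = Real.sqrt ((K₀ + 2) ^ 2) from
      (Real.sqrt_sq (by linarith)).symm]
    exact Real.sqrt_lt_sqrt (by positivity) hK₁
  have hMbig : M > K₀ + 2 := by
    have h4 : Real.sqrt (r ^ 2 + 4 * K₁) ≥ 2 * Real.sqrt K₁ := by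
      rw [show 2 * Real.sqrt K₁ = Real.sqrt (4 * K₁) by
        rw [show (4 : ℝ) * K₁ = 2 ^ 2 * K₁ by ring, Real.sqrt_mul (by positivity),
          Real.sqrt_sq (by norm_num)]]
      exact Real.sqrt_le_sqrt (by nlinarith)
    have : M ≥ Real.sqrt K₁ + r / 2 := by rw [hM]; linarith
    nlinarith [Real.sqrt_nonneg K₁]
  have hMpos : 0 < M := by linarith
  have hMK : M ^ 2 - K₁ = r * M := by linarith [hMquad]
  -- weights
  set p₂ : ℝ := (s₀ - ε * ω₀) / M with hp₂
  have hp₂pos : 0 < p₂ := div_pos hA hMpos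
  have hp₂le : p₂ ≤ s₀ / (s₀ + 2) := by
    have h1 : p₂ ≤ s₀ / M := by
      rw [hp₂]
      exact (div_le_div_iff_of_pos_right hMpos).mpr (by nlinarith)
    refine h1.trans ?_
    exact div_le_div_of_nonneg_left (le_of_lt hs₀) (by positivity) (by linarith)
  set p₀ : ℝ := 1 - ε - p₂ with hp₀
  have hp₀pos : 0 < p₀ := by
    have h1 : ε + p₂ ≤ 1 / (s₀ + 2) + s₀ / (s₀ + 2) := by linarith
    have h2 : 1 / (s₀ + 2) + s₀ / (s₀ + 2) = (1 + s₀) / (s₀ + 2) := by ring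
    have h3 : (1 + s₀) / (s₀ + 2) < 1 := by
      rw [div_lt_one (by positivity)]; linarith
    rw [hp₀]; rw [h2] at h1; linarith
  -- the measure
  set Q : Measure ℝ := ENNReal.ofReal p₀ • Measure.dirac 0 +
      ENNReal.ofReal ε • Measure.dirac ω₀ + ENNReal.ofReal p₂ • Measure.dirac M with hQ
  have hsum : p₀ + ε + p₂ = 1 := by rw [hp₀]; ring
  -- generic integral computation
  have key : ∀ f : ℝ → ℝ, Measurable f →
      ∫ ω, f ω ∂Q = p₀ * f 0 + ε * f ω₀ + p₂ * f M := by
    intro f hf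
    have i0 := integrable_dirac_of_meas hf 0
    have i1 := integrable_dirac_of_meas hf ω₀
    have i2 := integrable_dirac_of_meas hf M
    rw [hQ, integral_add_measure, integral_add_measure,
      integral_smul_measure, integral_smul_measure, integral_smul_measure,
      integral_dirac, integral_dirac, integral_dirac,
      ENNReal.toReal_ofReal hp₀pos.le, ENNReal.toReal_ofReal hεpos.le,
      ENNReal.toReal_ofReal hp₂pos.le]
    · rfl
    · exact i0.smul_measure ENNReal.ofReal_ne_top
    · exact i1.smul_measure ENNReal.ofReal_ne_top
    · exact (i0.smul_measure ENNReal.ofReal_ne_top).add_measure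
        (i1.smul_measure ENNReal.ofReal_ne_top)
    · exact i2.smul_measure ENNReal.ofReal_ne_top
  refine ⟨Q, ?_, ?_, ?_, ?_, ?_, ?_⟩
  · constructor
    rw [hQ]
    simp only [Measure.add_apply, Measure.smul_apply, smul_eq_mul,
      Measure.dirac_apply_of_mem (Set.mem_univ _), mul_one]
    rw [← ENNReal.ofReal_add hp₀pos.le hεpos.le,
      ← ENNReal.ofReal_add (by positivity) hp₂pos.le, hsum]
    simp
  · refine ⟨{0, ω₀, M}, ?_, ?_⟩
    · intro x hx
      simp only [Finset.coe_insert, Set.mem_insert_iff, Finset.coe_singleton,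
        Set.mem_singleton_iff] at hx
      rcases hx with rfl | rfl | rfl
      · exact ⟨Set.mem_Ici.2 le_rfl, fun h => by linarith [h.1]⟩
      · exact ⟨hω₀0, hω₀Γ⟩
      · exact ⟨Set.mem_Ici.2 (by linarith), fun h => by linarith [h.2]⟩
    · have hd : ∀ x : ℝ, x ∈ ({0, ω₀, M} : Finset ℝ) →
          Measure.dirac x (↑({0, ω₀, M} : Finset ℝ))ᶜ = 0 := by
        intro x hx
        rw [Measure.dirac_apply]
        exact Set.indicator_of_notMem
          (by simp only [Set.mem_compl_iff, not_not]; exact_mod_cast hx) 1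
      rw [hQ]
      simp only [Measure.add_apply, Measure.smul_apply, smul_eq_mul,
        hd 0 (by simp), hd ω₀ (by simp), hd M (by simp), mul_zero, add_zero]
  · calc (0:ENNReal) < ENNReal.ofReal ε := ENNReal.ofReal_pos.2 hεpos
      _ = ENNReal.ofReal ε * Measure.dirac ω₀ {ω₀} := by
          rw [show Measure.dirac ω₀ {ω₀} = 1 by simp, mul_one]
      _ ≤ Q {ω₀} := by
          rw [hQ]
          simp only [Measure.add_apply, Measure.smul_apply, smul_eq_mul]
          exact le_trans le_add_self (self_le_add_right _ _)
  · rw [key (fun ω => ω) measurable_id]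
    rw [hp₂]
    field_simp
    ring
  · rw [key _ (by unfold butterfly; fun_prop)]
    have hK₀pos : 0 < K₀ := by linarith
    rw [butterfly_eq_zero hK₀pos (Or.inl (by linarith)),
      butterfly_eq_zero hK₀pos ?_, butterfly_eq_zero hK₀pos (Or.inr hMbig.le)]
    · ring
    · rcases le_or_gt ω₀ K₀ with h | h
      · exact Or.inl h
      · right
        by_contra h2
        exact hω₀Γ ⟨h, by linarith⟩
  · rw [key _ (by unfold powerOption; fun_prop)]
    have h0 : powerOption K₁ 0 = 0 := by
      unfold powerOption
      rw [max_eq_right]; nlinarith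
    have hMM : powerOption K₁ M = r * M := by
      unfold powerOption
      rw [max_eq_left]
      · exact hMK
      · nlinarith
    rw [h0, hMM, ← hφω, hp₂, hr]
    have hMne : M ≠ 0 := ne_of_gt hMpos
    have hAne : s₀ - ε * ω₀ ≠ 0 := ne_of_gt hA
    field_simp
    ring
end

section
/- In the one-period market with Ω = [0,∞), riskless asset S⁰ ≡ 1, risky asset S₁(ω) = ω with initial price s₀ > 0, butterfly φ⁰ (strikes K₀, K₀+1, K₀+2; price 0) and power option φ¹(ω) = (ω²−K₁)⁺ (price c₁ > 0), assume K₀ > s₀ and K₁ > (K₀+2)². Let g₁(ω) = 1_{(K₀,K₀+2)}(ω). Then the model-independent superhedging price over all of Ω, π_Ω(g₁) := inf{x : ∃(H,h⁰,h¹) ∈ ℝ³, x + H(ω − s₀) + h⁰φ⁰(ω) + h¹(φ¹(ω) − c₁) ≥ g₁(ω) ∀ω ∈ Ω}, satisfies π_Ω(g₁) ≥ min{s₀/K₀, 1} > 0. -/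
/-- The digital option `g₁ = 1_{(K₀,K₀+2)}`. -/
noncomputable def digital (K₀ : ℝ) (ω : ℝ) : ℝ :=
  if ω ∈ Set.Ioo K₀ (K₀ + 2) then 1 else 0

set_option maxHeartbeats 1000000 in
lemma superhedge_aux
    (s₀ K₀ K₁ c₁ : ℝ) (hs₀ : 0 < s₀) (hK₀ : K₀ > s₀) (hK₁ : K₁ > (K₀ + 2) ^ 2)
    (hc₁ : 0 < c₁) (x H h₀ h₁ : ℝ)
    (hx : ∀ ω : ℝ, 0 ≤ ω →
        digital K₀ ω ≤ x + H * (ω - s₀) + h₀ * butterfly K₀ ω +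
          h₁ * (powerOption K₁ ω - c₁)) :
    s₀ / K₀ ≤ x := by
  have hK₀pos : 0 < K₀ := hs₀.trans hK₀
  have hK₁pos : 0 < K₁ := lt_trans (by positivity) hK₁
  -- evaluate at ω = 0
  have h0 := hx 0 le_rfl
  have e1 : digital K₀ 0 = 0 := by
    have : (0:ℝ) ∉ Set.Ioo K₀ (K₀ + 2) := by
      simp only [Set.mem_Ioo, not_and]; intro h; linarith
    simp [digital, this]
  have e2 : butterfly K₀ 0 = 0 := by
    simp only [butterfly]
    rw [max_eq_right (by linarith), max_eq_right (by linarith), max_eq_right (by linarith)]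
    ring
  have e3 : powerOption K₁ 0 = 0 := by
    simp only [powerOption]
    rw [max_eq_right (by nlinarith)]
  rw [e1, e2, e3] at h0
  -- h₁ ≥ 0 by letting ω → ∞
  have hh₁ : 0 ≤ h₁ := by
    by_contra hneg
    push_neg at hneg
    set C : ℝ := x + |H| * s₀ + (-h₁) * (K₁ + c₁) with hC
    set ω : ℝ := max (K₀ + 2) (max (Real.sqrt K₁ + 1) ((|C| + |H|) / (-h₁) + 1)) with hω
    have hω1 : K₀ + 2 ≤ ω := le_max_left _ _
    have hωs : Real.sqrt K₁ + 1 ≤ ω := le_trans (le_max_left _ _) (le_max_right _ _)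
    have hωc : (|C| + |H|) / (-h₁) + 1 ≤ ω := le_trans (le_max_right _ _) (le_max_right _ _)
    have hωpos : 0 ≤ ω := by linarith
    have hωge1 : 1 ≤ ω := by linarith
    have hωsq : K₁ ≤ ω ^ 2 := by
      have hs := Real.sq_sqrt hK₁pos.le
      have hsnn := Real.sqrt_nonneg K₁
      nlinarith
    have hbig := hx ω hωpos
    have d1 : digital K₀ ω = 0 := by
      have : ω ∉ Set.Ioo K₀ (K₀ + 2) := by
        simp only [Set.mem_Ioo, not_and]; intro h; linarith
      simp [digital, this]
    have d2 : butterfly K₀ ω = 0 := by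
      simp only [butterfly]
      rw [max_eq_left (by linarith), max_eq_left (by linarith), max_eq_left (by linarith)]
      ring
    have d3 : powerOption K₁ ω = ω ^ 2 - K₁ := by
      simp only [powerOption]
      rw [max_eq_left (by linarith)]
    rw [d1, d2, d3] at hbig
    -- derive contradiction
    have hmul : (|C| + |H|) + (-h₁) ≤ (-h₁) * ω := by
      have := (div_le_iff₀ (by linarith : (0:ℝ) < -h₁)).mp (by linarith : (|C| + |H|) / (-h₁) ≤ ω - 1)
      nlinarith
    have habsH1 : H ≤ |H| := le_abs_self H
    have habsH2 : -H ≤ |H| := neg_le_abs H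
    have habsC : C ≤ |C| := le_abs_self C
    nlinarith [mul_le_mul_of_nonneg_right hmul (by linarith : (0:ℝ) ≤ ω),
      mul_le_mul_of_nonneg_right habsH1 hωpos, abs_nonneg H, abs_nonneg C]
  -- evaluate near K₀ : 1 ≤ x + H(K₀ - s₀) - h₁ c₁
  have key : 1 ≤ x + H * (K₀ - s₀) - h₁ * c₁ := by
    have step : ∀ ε : ℝ, 0 < ε → ε < 1 →
        1 ≤ x + H * (K₀ - s₀) + (H + h₀) * ε - h₁ * c₁ := by
      intro ε hε0 hε1
      have hεω := hx (K₀ + ε) (by linarith)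
      have d1 : digital K₀ (K₀ + ε) = 1 := by
        have : (K₀ + ε) ∈ Set.Ioo K₀ (K₀ + 2) :=
          ⟨by linarith, by linarith⟩
        simp [digital, this]
      have d2 : butterfly K₀ (K₀ + ε) = ε := by
        simp only [butterfly]
        rw [max_eq_left (by linarith), max_eq_right (by linarith), max_eq_right (by linarith)]
        ring
      have d3 : powerOption K₁ (K₀ + ε) = 0 := by
        simp only [powerOption]
        rw [max_eq_right (by nlinarith)]
      rw [d1, d2, d3] at hεω
      nlinarith
    rcases le_or_gt (H + h₀) 0 with hHh | hHh
    · have := step (1/2) (by norm_num) (by norm_num)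
      nlinarith
    · by_contra hcon
      push_neg at hcon
      set A : ℝ := 1 - (x + H * (K₀ - s₀) - h₁ * c₁) with hA
      have hApos : 0 < A := by simp only [hA]; linarith
      obtain ⟨ε, hε0, hε1, hεle⟩ :
          ∃ ε : ℝ, 0 < ε ∧ ε < 1 ∧ ε ≤ A / (2 * (H + h₀)) :=
        ⟨min (A / (2 * (H + h₀))) (1/2), lt_min (by positivity) (by norm_num),
          lt_of_le_of_lt (min_le_right _ _) (by norm_num), min_le_left _ _⟩
      have hstep := step ε hε0 hε1
      have hle2 : (H + h₀) * ε ≤ A / 2 := by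
        have := mul_le_mul_of_nonneg_left hεle hHh.le
        have heq : (H + h₀) * (A / (2 * (H + h₀))) = A / 2 := by
          field_simp
        linarith [heq ▸ this]
      linarith
  -- conclude
  have hh₁c : 0 ≤ h₁ * c₁ := mul_nonneg hh₁ hc₁.le
  have hxs : s₀ / K₀ ≤ x := by
    rw [div_le_iff₀ hK₀pos]
    rcases le_total H (1 / K₀) with hH | hH
    · have hHK : H * K₀ ≤ 1 := by
        rw [← le_div_iff₀ hK₀pos]; exact hH
      nlinarith [mul_nonneg hh₁c hK₀pos.le,
        mul_nonneg (sub_nonneg.mpr hHK) (by linarith : (0:ℝ) ≤ K₀ - s₀)]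
    · have hHK : 1 ≤ H * K₀ := by
        rw [← div_le_iff₀ hK₀pos]; exact hH
      nlinarith [mul_nonneg hh₁c hK₀pos.le,
        mul_nonneg (sub_nonneg.mpr hHK) hs₀.le]
  exact hxs


/-- The model-independent superhedging price of the digital option `g₁` over the whole
path space `[0,∞)` is at least `min {s₀/K₀, 1} > 0`: every semi-static portfolio
superhedging `g₁` everywhere costs at least `min {s₀/K₀, 1}`. -/
theorem superhedging_everywhere_duality_gap
    (s₀ K₀ K₁ c₁ : ℝ) (hs₀ : 0 < s₀) (hK₀ : K₀ > s₀) (hK₁ : K₁ > (K₀ + 2) ^ 2)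
    (hc₁ : 0 < c₁) :
    0 < min (s₀ / K₀) 1 ∧
    ∀ x : ℝ, (∃ H h₀ h₁ : ℝ, ∀ ω : ℝ, 0 ≤ ω →
        digital K₀ ω ≤ x + H * (ω - s₀) + h₀ * butterfly K₀ ω +
          h₁ * (powerOption K₁ ω - c₁)) →
      min (s₀ / K₀) 1 ≤ x := by
  have hK₀pos : 0 < K₀ := hs₀.trans hK₀
  refine ⟨lt_min (div_pos hs₀ hK₀pos) one_pos, ?_⟩
  rintro x ⟨H, h₀, h₁, hx⟩
  exact le_trans (min_le_left _ _) (superhedge_aux s₀ K₀ K₁ c₁ hs₀ hK₀ hK₁ hc₁ x H h₀ h₁ hx)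
end
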